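/- For every n ≥ 0 there exist nonnegative integers a_{j,n} (0 ≤ j ≤ n) and b_{j,n} (0 ≤ j ≤ n−2) such that: (1) for every function f : ℤ → ℂ, every integer a, and every integer K ≥ 0, T₋(a, q_n·K + c_n) = ((q_n+1)/2)·T₋(a,K) − ((q_n−1)/2)·T₊(a−K,K) + ∑_{j=0}^{n} a_{j,n}·S₋^{(j)}(a,K) − ∑_{j=0}^{n−2} b_{j,n}·S₊^{(j)}(a,K); (2) under the same hypotheses, T₊(a − q_n·K − c_n, q_n·K + c_n) = ((q_n+1)/2)·T₊(a−K,K) − ((q_n−1)/2)·T₋(a,K) + ∑_{j=0}^{n} a_{j,n}·S₊^{(j)}(a,K) − ∑_{j=0}^{n−2} b_{j,n}·S₋^{(j)}(a,K); and (3) ∑_{j=0}^{n} a_{j,n}·(q_{j−1}+q_{j−2}) + ∑_{j=0}^{n−2} b_{j,n}·(q_{j−1}+q_{j−2}) = 2·p_n. -/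

import Mathlib

open Finset

/-- `Q k` is `q_{k-2}` of the paper: `Q 0 = q_{-2} = 1`, `Q 1 = q_{-1} = 1`,
and `Q (k+2) = 2 * Q (k+1) + Q k`, so that `q_n = Q (n+2)` for `n ≥ -2`. -/
def Q : ℕ → ℤ
  | 0 => 1
  | 1 => 1
  | (k+2) => 2 * Q (k+1) + Q k

/-- `q_n` for `n ≥ 0`. -/
def qn (n : ℕ) : ℤ := Q (n + 2)

/-- `P k` is `p_{k-2}` of the paper: `P 0 = p_{-2} = 0`, `P 1 = p_{-1} = 0`,
and `P (k+2) = 2 * P (k+1) + P k + (Q (k+1) + Q k)/2` (the division is exact). -/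
def P : ℕ → ℤ
  | 0 => 0
  | 1 => 0
  | (k+2) => 2 * P (k+1) + P k + (Q (k+1) + Q k) / 2

/-- `p_n` for `n ≥ 0`. -/
def pn (n : ℕ) : ℤ := P (n + 2)

/-- `c (k)` is `c_{k-2} = (q_{k-2} - 1)/2` of the paper (the division is exact). -/
def c (k : ℕ) : ℤ := (Q k - 1) / 2

/-- Triangular sum `T₋(x,y) = ∑_{k=1}^{y} (y+1-k)·f(x+k)`. -/
noncomputable def Tm (f : ℤ → ℂ) (x y : ℤ) : ℂ :=
  ∑ k ∈ Finset.Icc 1 y, ((y + 1 - k : ℤ) : ℂ) * f (x + k)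

/-- Triangular sum `T₊(x,y) = ∑_{k=1}^{y} k·f(x+k)`. -/
noncomputable def Tp (f : ℤ → ℂ) (x y : ℤ) : ℂ :=
  ∑ k ∈ Finset.Icc 1 y, ((k : ℤ) : ℂ) * f (x + k)

/-- Square sum `S(x,y) = ∑_{i=x+1}^{x+y} ∑_{j=0}^{y-1} f(i+j)`. -/
noncomputable def Sq (f : ℤ → ℂ) (x y : ℤ) : ℂ :=
  ∑ i ∈ Finset.Icc (x + 1) (x + y), ∑ j ∈ Finset.Icc 0 (y - 1), f (i + j)

/-- `S₋^{(j)}(a,K) = S(a − q_{j−2}·K − c_{j−2}, (q_{j−2}+q_{j−1})·K + c_j − c_{j−1})`,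
with `q_{j-2} = Q j`, `q_{j-1} = Q (j+1)`, `q_j = Q (j+2)`, and similarly for `c`. -/
noncomputable def Sminus (f : ℤ → ℂ) (j : ℕ) (a K : ℤ) : ℂ :=
  Sq f (a - Q j * K - c j) ((Q j + Q (j + 1)) * K + c (j + 2) - c (j + 1))

/-- `S₊^{(j)}(a,K) = S(a − q_j·K − c_j, (q_{j−2}+q_{j−1})·K + c_j − c_{j−1})`. -/
noncomputable def Splus (f : ℤ → ℂ) (j : ℕ) (a K : ℤ) : ℂ :=
  Sq f (a - Q (j + 2) * K - c (j + 2)) ((Q j + Q (j + 1)) * K + c (j + 2) - c (j + 1))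

/-!
Write `X m = q_{m-2} K + c_{m-2}`, so that `X (m+2) = 2 X (m+1) + X m + 1`. Splitting the
triangle of side `2M + N + 1` into a triangle of side `M + 1`, a block of constant weight and a
triangle of side `M + N`, and the square of side `M + N + 1` into two triangles, gives
`T₋(a, 2M+N+1) = 2 T₋(a, M) - T₊(a-N, N) + S(a-N, M+N+1)` and its mirror image for `T₊`.
Hence `U m = T₋(a, X m)` and `V m = T₊(a - X m, X m)` satisfy the linear recurrence
`U (m+2) = 2 U (m+1) - V m + S₋^{(m)}`, `V (m+2) = 2 V (m+1) - U m + S₊^{(m)}` with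
`U 1 = U 0`, `V 1 = V 0`. Unrolling it expresses `U m`, `V m` through `U 0`, `V 0` and the square
sums, with coefficients given by a recursion in `ℕ`; the same recurrence, satisfied by `2 p`,
yields the weight identity.
-/

theorem Q_add_two (m : ℕ) : Q (m + 2) = 2 * Q (m + 1) + Q m := rfl

theorem one_le_Q (m : ℕ) : 1 ≤ Q m := by
  induction m using Nat.twoStepInduction with
  | zero | one => exact le_rfl
  | more m h0 h1 => rw [Q_add_two]; omega

theorem Q_emod_two (m : ℕ) : Q m % 2 = 1 := by
  induction m using Nat.twoStepInduction with
  | zero | one => rfl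
  | more m h0 h1 => rw [Q_add_two]; omega

theorem two_mul_c_add_one (m : ℕ) : 2 * c m + 1 = Q m := by
  have := Q_emod_two m
  rw [c]
  omega

theorem c_add_two (m : ℕ) : c (m + 2) = 2 * c (m + 1) + c m + 1 := by
  have := two_mul_c_add_one (m + 2)
  have := two_mul_c_add_one (m + 1)
  have := two_mul_c_add_one m
  have := Q_add_two m
  omega

theorem Q_mul_add_c_add_two (m : ℕ) (K : ℤ) :
    Q (m + 2) * K + c (m + 2) = 2 * (Q (m + 1) * K + c (m + 1)) + (Q m * K + c m) + 1 := by
  rw [Q_add_two, c_add_two]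
  ring

theorem Q_mul_add_c_nonneg (m : ℕ) {K : ℤ} (hK : 0 ≤ K) : 0 ≤ Q m * K + c m := by
  have := one_le_Q m
  have := two_mul_c_add_one m
  nlinarith

theorem sum_Icc_shift {β : Type*} [AddCommMonoid β] (g : ℤ → β) (x u v : ℤ) :
    ∑ k ∈ Icc u v, g (x + k) = ∑ i ∈ Icc (x + u) (x + v), g i := by
  rw [← map_add_left_Icc, sum_map]
  rfl

theorem sum_Icc_one_add {β : Type*} [AddCommMonoid β] (g : ℤ → β) {y z : ℤ}
    (hy : 0 ≤ y) (hz : 0 ≤ z) :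
    ∑ k ∈ Icc 1 (y + z), g k = ∑ k ∈ Icc 1 y, g k + ∑ k ∈ Icc 1 z, g (y + k) := by
  rw [sum_Icc_shift, ← sum_union]
  · congr 1
    ext k
    simp only [mem_union, mem_Icc]
    omega
  · rw [disjoint_left]
    intro k
    simp only [mem_Icc]
    omega

theorem sum_const_Icc {β : Type*} [Ring β] {u v : ℤ} (h : u ≤ v + 1) (z : β) :
    ∑ _t ∈ Icc u v, z = ((v + 1 - u : ℤ) : β) * z := by
  rw [sum_const, nsmul_eq_mul, ← Int.cast_natCast, Int.card_Icc_of_le _ _ h]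

section TriangleSums

variable (f : ℤ → ℂ)

noncomputable def Seg (x y : ℤ) : ℂ := ∑ k ∈ Icc 1 y, f (x + k)

theorem Seg_add (x : ℤ) {y z : ℤ} (hy : 0 ≤ y) (hz : 0 ≤ z) :
    Seg f x (y + z) = Seg f x y + Seg f (x + y) z := by
  simp only [Seg, sum_Icc_one_add _ hy hz, add_assoc]

theorem Tm_add (x : ℤ) {y z : ℤ} (hy : 0 ≤ y) (hz : 0 ≤ z) :
    Tm f x (y + z) = Tm f x y + z * Seg f x y + Tm f (x + y) z := by
  simp only [Tm, Seg, sum_Icc_one_add _ hy hz, mul_sum, ← sum_add_distrib]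
  congr 1 <;> refine sum_congr rfl fun k _ => ?_ <;> push_cast <;> ring_nf

theorem Tp_add (x : ℤ) {y z : ℤ} (hy : 0 ≤ y) (hz : 0 ≤ z) :
    Tp f x (y + z) = Tp f x y + y * Seg f (x + y) z + Tp f (x + y) z := by
  simp only [Tp, Seg, sum_Icc_one_add _ hy hz, mul_sum, add_assoc, ← sum_add_distrib]
  congr 1
  refine sum_congr rfl fun k _ => ?_
  push_cast
  ring

theorem Tm_add_Tp (x y : ℤ) : Tm f x y + Tp f x y = (y + 1) * Seg f x y := by
  simp only [Tm, Tp, Seg, mul_sum, ← sum_add_distrib]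
  refine sum_congr rfl fun k _ => ?_
  push_cast
  ring

theorem Tm_one (x : ℤ) : Tm f x 1 = Seg f x 1 := by
  norm_num [Tm, Seg]

theorem Tm_succ (x : ℤ) {y : ℤ} (hy : 0 ≤ y) : Tm f x (y + 1) = Tm f x y + Seg f x (y + 1) := by
  rw [Tm_add f x hy zero_le_one, Seg_add f x hy zero_le_one, Tm_one]
  push_cast
  ring

theorem Tm_eq_sum_Seg (x y : ℤ) : Tm f x y = ∑ t ∈ Icc 0 y, Seg f x t := by
  have hcol : ∀ k ∈ Icc 1 y, ((y + 1 - k : ℤ) : ℂ) * f (x + k) = ∑ _t ∈ Icc k y, f (x + k) :=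
    fun k hk => (sum_const_Icc (by simp only [mem_Icc] at hk; omega) _).symm
  rw [Tm, sum_congr rfl hcol]
  exact sum_comm' fun k t => by simp only [mem_Icc]; omega

theorem Tp_eq_sum_Seg (x y : ℤ) : Tp f x y = ∑ t ∈ Icc 0 (y - 1), Seg f (x + t) (y - t) := by
  have hcol : ∀ k ∈ Icc 1 y, ((k : ℤ) : ℂ) * f (x + k) = ∑ _t ∈ Icc 0 (k - 1), f (x + k) := by
    intro k hk
    rw [sum_const_Icc (by simp only [mem_Icc] at hk; omega)]
    ring_nf
  have hrow : ∀ t ∈ Icc 0 (y - 1), ∑ k ∈ Icc (t + 1) y, f (x + k) = Seg f (x + t) (y - t) := by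
    intro t _
    rw [Seg, sum_Icc_shift f x, sum_Icc_shift f (x + t), add_assoc, add_add_sub_cancel]
  rw [Tp, sum_congr rfl hcol, ← sum_congr rfl hrow]
  exact sum_comm' fun k t => by simp only [mem_Icc]; omega

theorem Sq_eq_sum_Seg (x y : ℤ) : Sq f x y = ∑ t ∈ Icc 0 (y - 1), Seg f (x + t) y := by
  rw [Sq, sum_comm]
  refine sum_congr rfl fun t _ => ?_
  rw [Seg, ← sum_Icc_shift (fun i => f (i + t)) x 1 y]
  exact sum_congr rfl fun k _ => by ring_nf

theorem Sq_eq_Tp_add_Tm (x y : ℤ) : Sq f x y = Tp f x y + Tm f (x + y) (y - 1) := by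
  have hrow : ∀ t ∈ Icc 0 (y - 1), Seg f (x + t) y = Seg f (x + t) (y - t) + Seg f (x + y) t := by
    intro t ht
    simp only [mem_Icc] at ht
    have h := Seg_add f (x + t) (y := y - t) (z := t) (by omega) (by omega)
    rwa [sub_add_cancel, add_add_sub_cancel] at h
  rw [Sq_eq_sum_Seg, sum_congr rfl hrow, sum_add_distrib, ← Tp_eq_sum_Seg, Tm_eq_sum_Seg]

theorem Tm_two_mul_add_add_one (a : ℤ) {M N : ℤ} (hM : 0 ≤ M) (hN : 0 ≤ N) :
    Tm f a (2 * M + N + 1) = 2 * Tm f a M - Tp f (a - N) N + Sq f (a - N) (M + N + 1) := by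
  have h1 := Tm_add f a (y := M + 1) (z := M + N) (by omega) (by omega)
  have h2 := Tm_succ f a hM
  have h3 := Sq_eq_Tp_add_Tm f (a - N) (M + N + 1)
  have h4 := Tp_add f (a - N) (y := N) (z := M + 1) hN (by omega)
  have h5 := Tm_add_Tp f a (M + 1)
  rw [show M + 1 + (M + N) = 2 * M + N + 1 by ring] at h1
  rw [show a - N + (M + N + 1) = a + (M + 1) by ring, add_sub_cancel_right] at h3
  rw [show N + (M + 1) = M + N + 1 by ring, sub_add_cancel] at h4
  linear_combination (norm := (push_cast; ring1)) h1 + 2 * h2 - h3 - h4 - h5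

theorem Tp_two_mul_add_add_one (a : ℤ) {M N : ℤ} (hM : 0 ≤ M) (hN : 0 ≤ N) :
    Tp f (a - (2 * M + N + 1)) (2 * M + N + 1) =
      2 * Tp f (a - M) M - Tm f a N + Sq f (a - (2 * M + N + 1)) (M + N + 1) := by
  have h1 := Tp_add f (a - (2 * M + N + 1)) (y := M + N + 1) (z := M) (by omega) hM
  have h2 := Sq_eq_Tp_add_Tm f (a - (2 * M + N + 1)) (M + N + 1)
  have h3 := Tm_add f (a - M) (y := M) (z := N) hM hN
  have h4 := Tm_add_Tp f (a - M) M
  rw [show M + N + 1 + M = 2 * M + N + 1 by ring,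
    show a - (2 * M + N + 1) + (M + N + 1) = a - M by ring] at h1
  rw [show a - (2 * M + N + 1) + (M + N + 1) = a - M by ring, add_sub_cancel_right] at h2
  rw [sub_add_cancel] at h3
  linear_combination (norm := (push_cast; ring1)) h1 - h2 - h3 - h4

theorem Sminus_eq_Sq (m : ℕ) (a K : ℤ) :
    Sminus f m a K =
      Sq f (a - (Q m * K + c m)) (Q (m + 1) * K + c (m + 1) + (Q m * K + c m) + 1) := by
  rw [Sminus, c_add_two]
  ring_nf

theorem Splus_eq_Sq (m : ℕ) (a K : ℤ) :
    Splus f m a K = Sq f (a - (Q (m + 2) * K + c (m + 2)))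
      (Q (m + 1) * K + c (m + 1) + (Q m * K + c m) + 1) := by
  rw [Splus, c_add_two]
  ring_nf

theorem Tm_recurrence (a : ℤ) {K : ℤ} (hK : 0 ≤ K) (m : ℕ) :
    Tm f a (Q (m + 2) * K + c (m + 2)) =
      2 * Tm f a (Q (m + 1) * K + c (m + 1)) - Tp f (a - Q m * K - c m) (Q m * K + c m) +
        Sminus f m a K := by
  rw [Q_mul_add_c_add_two, Tm_two_mul_add_add_one f a (Q_mul_add_c_nonneg (m + 1) hK)
    (Q_mul_add_c_nonneg m hK), Sminus_eq_Sq, sub_sub]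

theorem Tp_recurrence (a : ℤ) {K : ℤ} (hK : 0 ≤ K) (m : ℕ) :
    Tp f (a - Q (m + 2) * K - c (m + 2)) (Q (m + 2) * K + c (m + 2)) =
      2 * Tp f (a - Q (m + 1) * K - c (m + 1)) (Q (m + 1) * K + c (m + 1)) -
        Tm f a (Q m * K + c m) + Splus f m a K := by
  rw [Splus_eq_Sq, sub_sub, sub_sub, Q_mul_add_c_add_two, Tp_two_mul_add_add_one f a
    (Q_mul_add_c_nonneg (m + 1) hK) (Q_mul_add_c_nonneg m hK)]

end TriangleSums

-- `coeffA m j` and `coeffB m j` are the paper's `a_{j,m-2}` and `b_{j,m-2}`.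
mutual
def coeffA : ℕ → ℕ → ℕ
  | 0, _ => 0
  | 1, _ => 0
  | m + 2, j => 2 * coeffA (m + 1) j + coeffB m j + if j = m then 1 else 0

def coeffB : ℕ → ℕ → ℕ
  | 0, _ => 0
  | 1, _ => 0
  | m + 2, j => 2 * coeffB (m + 1) j + coeffA m j
end

section LinearRecurrence

variable {M : Type*} [AddCommGroup M]

theorem sum_coeffA_add_two_smul (m N : ℕ) (hm : m < N) (Sm : ℕ → M) :
    ∑ j ∈ range N, coeffA (m + 2) j • Sm j =
      2 • ∑ j ∈ range N, coeffA (m + 1) j • Sm j + ∑ j ∈ range N, coeffB m j • Sm j + Sm m := by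
  simp only [coeffA, add_smul, mul_smul, ite_smul, one_smul, zero_smul, sum_add_distrib,
    smul_sum, sum_ite_eq', mem_range, if_pos hm]

theorem sum_coeffB_add_two_smul (m N : ℕ) (Sp : ℕ → M) :
    ∑ j ∈ range N, coeffB (m + 2) j • Sp j =
      2 • ∑ j ∈ range N, coeffB (m + 1) j • Sp j + ∑ j ∈ range N, coeffA m j • Sp j := by
  simp only [coeffB, add_smul, mul_smul, sum_add_distrib, smul_sum]

-- The sums may run over any ranges containing the supports `j < m - 1` of `coeffA m`
-- and `j < m - 3` of `coeffB m`.
theorem eq_expansion_of_recurrence {U V Sm Sp : ℕ → M}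
    (hU : ∀ m, U (m + 2) = 2 • U (m + 1) - V m + Sm m)
    (hV : ∀ m, V (m + 2) = 2 • V (m + 1) - U m + Sp m)
    (hU1 : U 1 = U 0) (hV1 : V 1 = V 0) (m : ℕ) {N₁ N₂ : ℕ} (h₁ : m - 1 ≤ N₁) (h₂ : m - 3 ≤ N₂) :
    U m = (c m + 1) • U 0 - c m • V 0 +
        ∑ j ∈ range N₁, coeffA m j • Sm j - ∑ j ∈ range N₂, coeffB m j • Sp j ∧
      V m = (c m + 1) • V 0 - c m • U 0 +
        ∑ j ∈ range N₁, coeffA m j • Sp j - ∑ j ∈ range N₂, coeffB m j • Sm j := by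
  induction m using Nat.twoStepInduction generalizing N₁ N₂ with
  | zero => simp [coeffA, coeffB, c, Q]
  | one => simp [coeffA, coeffB, c, Q, hU1, hV1]
  | more m ih₀ ih₁ =>
    obtain ⟨hU₁, hV₁⟩ := ih₁ (N₁ := N₁) (N₂ := N₂) (by omega) (by omega)
    obtain ⟨hU₀, hV₀⟩ := ih₀ (N₁ := N₂) (N₂ := N₁) (by omega) (by omega)
    rw [hU, hV, hU₁, hV₁, hU₀, hV₀, sum_coeffA_add_two_smul m N₁ (by omega),
      sum_coeffA_add_two_smul m N₁ (by omega), sum_coeffB_add_two_smul, sum_coeffB_add_two_smul,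
      c_add_two]
    constructor <;> module

end LinearRecurrence

theorem Tm_Tp_expansion (f : ℤ → ℂ) (a : ℤ) {K : ℤ} (hK : 0 ≤ K) (m : ℕ) {N₁ N₂ : ℕ}
    (h₁ : m - 1 ≤ N₁) (h₂ : m - 3 ≤ N₂) :
    Tm f a (Q m * K + c m) = ((c m + 1 : ℤ) : ℂ) * Tm f a K - (c m : ℂ) * Tp f (a - K) K +
        ∑ j ∈ range N₁, (coeffA m j : ℂ) * Sminus f j a K -
        ∑ j ∈ range N₂, (coeffB m j : ℂ) * Splus f j a K ∧
      Tp f (a - Q m * K - c m) (Q m * K + c m) =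
        ((c m + 1 : ℤ) : ℂ) * Tp f (a - K) K - (c m : ℂ) * Tm f a K +
        ∑ j ∈ range N₁, (coeffA m j : ℂ) * Splus f j a K -
        ∑ j ∈ range N₂, (coeffB m j : ℂ) * Sminus f j a K := by
  have h := eq_expansion_of_recurrence (U := fun m => Tm f a (Q m * K + c m))
    (V := fun m => Tp f (a - Q m * K - c m) (Q m * K + c m))
    (Sm := fun j => Sminus f j a K) (Sp := fun j => Splus f j a K)
    (fun m => by simpa using Tm_recurrence f a hK m)
    (fun m => by simpa using Tp_recurrence f a hK m) rfl rfl m h₁ h₂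
  simpa [Q, c, zsmul_eq_mul, nsmul_eq_mul] using h

-- The same recurrence, for `U = 2 p`, `V = -2 p` and `S⁻ j = -S⁺ j = q_{j-1} + q_{j-2}`.
theorem sum_coeff_mul_Q_add_Q (m : ℕ) {N₁ N₂ : ℕ} (h₁ : m - 1 ≤ N₁) (h₂ : m - 3 ≤ N₂) :
    ∑ j ∈ range N₁, (coeffA m j : ℤ) * (Q (j + 1) + Q j) +
      ∑ j ∈ range N₂, (coeffB m j : ℤ) * (Q (j + 1) + Q j) = 2 * P m := by
  have hP : ∀ m, 2 * P (m + 2) = 2 * (2 * P (m + 1)) + 2 * P m + (Q (m + 1) + Q m) := by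
    intro m
    have h : P (m + 2) = 2 * P (m + 1) + P m + (Q (m + 1) + Q m) / 2 := rfl
    have := two_mul_c_add_one (m + 1)
    have := two_mul_c_add_one m
    omega
  have h := (eq_expansion_of_recurrence (U := fun m => 2 * P m) (V := fun m => -(2 * P m))
    (Sm := fun j => Q (j + 1) + Q j) (Sp := fun j => -(Q (j + 1) + Q j))
    (fun m => by simp only [hP, two_nsmul]; ring) (fun m => by simp only [hP, two_nsmul]; ring)
    rfl rfl m h₁ h₂).1
  simp only [P, mul_zero, smul_zero, neg_zero, sub_zero, zero_add, smul_neg, sum_neg_distrib,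
    sub_neg_eq_add, nsmul_eq_mul] at h
  exact h.symm

/-- **Lemma 3 and Lemma 4**. For every `n ≥ 0` there are nonnegative integers
`a_{j,n}` (`0 ≤ j ≤ n`) and `b_{j,n}` (`0 ≤ j ≤ n−2`) such that for all `f`, `a` and `K ≥ 0`:
`T₋(a, q_n K + c_n) = ((q_n+1)/2)·T₋(a,K) − ((q_n−1)/2)·T₊(a−K,K)
    + ∑_{j=0}^{n} a_{j,n}·S₋^{(j)}(a,K) − ∑_{j=0}^{n−2} b_{j,n}·S₊^{(j)}(a,K)`,
`T₊(a − q_n K − c_n, q_n K + c_n) = ((q_n+1)/2)·T₊(a−K,K) − ((q_n−1)/2)·T₋(a,K)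
    + ∑_{j=0}^{n} a_{j,n}·S₊^{(j)}(a,K) − ∑_{j=0}^{n−2} b_{j,n}·S₋^{(j)}(a,K)`,
and moreover
`∑_{j=0}^{n} a_{j,n}·(q_{j−1}+q_{j−2}) + ∑_{j=0}^{n−2} b_{j,n}·(q_{j−1}+q_{j−2}) = 2·p_n`. -/
theorem recursion_general (n : ℕ) :
    ∃ aa bb : ℕ → ℤ,
      (∀ j ∈ Finset.range (n + 1), 0 ≤ aa j) ∧
      (∀ j ∈ Finset.range (n - 1), 0 ≤ bb j) ∧
      (∀ f : ℤ → ℂ, ∀ a K : ℤ, 0 ≤ K →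
        Tm f a (Q (n + 2) * K + c (n + 2)) =
          (((Q (n + 2) + 1) / 2 : ℤ) : ℂ) * Tm f a K -
            (((Q (n + 2) - 1) / 2 : ℤ) : ℂ) * Tp f (a - K) K +
            ∑ j ∈ Finset.range (n + 1), (aa j : ℂ) * Sminus f j a K -
            ∑ j ∈ Finset.range (n - 1), (bb j : ℂ) * Splus f j a K) ∧
      (∀ f : ℤ → ℂ, ∀ a K : ℤ, 0 ≤ K →
        Tp f (a - Q (n + 2) * K - c (n + 2)) (Q (n + 2) * K + c (n + 2)) =
          (((Q (n + 2) + 1) / 2 : ℤ) : ℂ) * Tp f (a - K) K -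
            (((Q (n + 2) - 1) / 2 : ℤ) : ℂ) * Tm f a K +
            ∑ j ∈ Finset.range (n + 1), (aa j : ℂ) * Splus f j a K -
            ∑ j ∈ Finset.range (n - 1), (bb j : ℂ) * Sminus f j a K) ∧
      (∑ j ∈ Finset.range (n + 1), aa j * (Q (j + 1) + Q j) +
        ∑ j ∈ Finset.range (n - 1), bb j * (Q (j + 1) + Q j) = 2 * pn n) := by
  have hc : (Q (n + 2) + 1) / 2 = c (n + 2) + 1 ∧ (Q (n + 2) - 1) / 2 = c (n + 2) := by
    have := two_mul_c_add_one (n + 2)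
    omega
  refine ⟨fun j => coeffA (n + 2) j, fun j => coeffB (n + 2) j, fun _ _ => Int.natCast_nonneg _,
    fun _ _ => Int.natCast_nonneg _, fun f a K hK => ?_, fun f a K hK => ?_,
    sum_coeff_mul_Q_add_Q (n + 2) le_rfl le_rfl⟩
  · simpa [hc] using (Tm_Tp_expansion f a hK (n + 2) (N₁ := n + 1) (N₂ := n - 1) le_rfl le_rfl).1
  · simpa [hc] using (Tm_Tp_expansion f a hK (n + 2) (N₁ := n + 1) (N₂ := n - 1) le_rfl le_rfl).2
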